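/- arXiv:1612.00904 — 3 statements merged into one kernel-verified Lean document; each statement's English description precedes it below -/
import Mathlib

section
/- Let A and B be two r-dimensional subspaces of R^n with orthogonal projections P_A, P_B. Then the coherences satisfy √η(B) ≤ √η(A) + ‖P_{A⊥} P_B‖ · √(n/r), where ‖·‖ is the spectral (operator) norm and η(·) is subspace coherence. -/
open Matrix

/-- Spectral (operator) norm of a real matrix. -/
noncomputable def spec {n m : ℕ} (M : Matrix (Fin n) (Fin m) ℝ) : ℝ :=
  ‖LinearMap.toContinuousLinearMap (Matrix.toEuclideanLin M)‖

/-- Coherence of the span of an orthonormal basis matrix `S`: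
`(n/r) · max_i ‖S[i,:]‖₂²`. -/
noncomputable def coher {n r : ℕ} (S : Matrix (Fin n) (Fin r) ℝ) : ℝ :=
  (n / r : ℝ) * ⨆ i : Fin n, ∑ j, (S i j) ^ 2

section aux
open RealInnerProductSpace
variable {n : ℕ}

private lemma euclid_apply (M : Matrix (Fin n) (Fin n) ℝ) (x : EuclideanSpace ℝ (Fin n))
    (i : Fin n) : Matrix.toEuclideanLin M x i = ∑ j, M i j * x j := by
  simp [Matrix.toEuclideanLin_apply, Matrix.mulVec, dotProduct]

private lemma euclid_mul (M N : Matrix (Fin n) (Fin n) ℝ) (x : EuclideanSpace ℝ (Fin n)) :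
    Matrix.toEuclideanLin (M * N) x = Matrix.toEuclideanLin M (Matrix.toEuclideanLin N x) := by
  simp [Matrix.toEuclideanLin_apply, Matrix.mulVec_mulVec]

private lemma euclid_norm_sq (x : EuclideanSpace ℝ (Fin n)) : ‖x‖ ^ 2 = ∑ i, x i ^ 2 := by
  rw [EuclideanSpace.norm_eq, Real.sq_sqrt (by positivity)]
  simp [sq_abs]

private lemma inner_transpose (M : Matrix (Fin n) (Fin n) ℝ) (x y : EuclideanSpace ℝ (Fin n)) :
    ⟪Matrix.toEuclideanLin Mᵀ x, y⟫ = ⟪x, Matrix.toEuclideanLin M y⟫ := by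
  simp only [PiLp.inner_apply, RCLike.inner_apply, conj_trivial]
  have h1 : ∀ i, Matrix.toEuclideanLin Mᵀ x i = ∑ j, M j i * x j := by
    intro i; simp [Matrix.toEuclideanLin_apply, Matrix.mulVec, dotProduct]
  simp only [h1, euclid_apply, Finset.sum_mul, Finset.mul_sum]
  rw [Finset.sum_comm]
  apply Finset.sum_congr rfl; intro i _; apply Finset.sum_congr rfl; intro j _; ring

private lemma apply_le_spec (M : Matrix (Fin n) (Fin n) ℝ) (x : EuclideanSpace ℝ (Fin n)) :
    ‖Matrix.toEuclideanLin M x‖ ≤ spec M * ‖x‖ := by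
  unfold spec
  exact (LinearMap.toContinuousLinearMap (Matrix.toEuclideanLin M)).le_opNorm x

private lemma spec_nonneg (M : Matrix (Fin n) (Fin n) ℝ) : 0 ≤ spec M := by
  unfold spec; exact norm_nonneg _

private lemma spec_transpose_le (M : Matrix (Fin n) (Fin n) ℝ) : spec Mᵀ ≤ spec M := by
  have h : ∀ x : EuclideanSpace ℝ (Fin n),
      ‖Matrix.toEuclideanLin Mᵀ x‖ ≤ spec M * ‖x‖ := by
    intro x
    set u := Matrix.toEuclideanLin Mᵀ x with hu
    rcases (norm_nonneg u).eq_or_lt with h0 | h0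
    · rw [← h0]; exact mul_nonneg (spec_nonneg M) (norm_nonneg x)
    · have key : ‖u‖ ^ 2 ≤ (spec M * ‖x‖) * ‖u‖ := by
        have e1 : ‖u‖ ^ 2 = ⟪u, u⟫ := (real_inner_self_eq_norm_sq u).symm
        have e2 : ⟪u, u⟫ = ⟪x, Matrix.toEuclideanLin M u⟫ := by
          rw [hu, inner_transpose]
        have e3 : ⟪x, Matrix.toEuclideanLin M u⟫ ≤ ‖x‖ * ‖Matrix.toEuclideanLin M u‖ :=
          real_inner_le_norm _ _
        have e4 : ‖Matrix.toEuclideanLin M u‖ ≤ spec M * ‖u‖ := apply_le_spec M u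
        nlinarith [norm_nonneg x]
      have := le_of_mul_le_mul_right (by nlinarith : ‖u‖ * ‖u‖ ≤ (spec M * ‖x‖) * ‖u‖) h0
      exact this
  unfold spec
  exact ContinuousLinearMap.opNorm_le_bound _ (spec_nonneg M) fun x => h x

private lemma spec_transpose (M : Matrix (Fin n) (Fin n) ℝ) : spec Mᵀ = spec M :=
  le_antisymm (spec_transpose_le M) (by simpa using spec_transpose_le Mᵀ)

private lemma proj_contraction {r : ℕ} (B : Matrix (Fin n) (Fin r) ℝ) (hB : Bᵀ * B = 1)
    (x : EuclideanSpace ℝ (Fin n)) : ‖Matrix.toEuclideanLin (B * Bᵀ) x‖ ≤ ‖x‖ := by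
  have hsym : (B * Bᵀ)ᵀ = B * Bᵀ := by simp [Matrix.transpose_mul]
  have hid : (B * Bᵀ) * (B * Bᵀ) = B * Bᵀ := by
    rw [Matrix.mul_assoc, ← Matrix.mul_assoc Bᵀ, hB, Matrix.one_mul]
  set u := Matrix.toEuclideanLin (B * Bᵀ) x with hu
  rcases (norm_nonneg u).eq_or_lt with h0 | h0
  · rw [← h0]; exact norm_nonneg x
  · have hu' : u = Matrix.toEuclideanLin ((B * Bᵀ)ᵀ) x := by rw [hsym, ← hu]
    have e2 : ⟪u, u⟫ = ⟪x, u⟫ := by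
      calc ⟪u, u⟫ = ⟪Matrix.toEuclideanLin ((B * Bᵀ)ᵀ) x, u⟫ := by rw [← hu']
        _ = ⟪x, Matrix.toEuclideanLin (B * Bᵀ) u⟫ := inner_transpose _ _ _
        _ = ⟪x, u⟫ := by
            rw [hu, ← euclid_mul, hid]
    have key : ‖u‖ ^ 2 ≤ ‖x‖ * ‖u‖ := by
      have e1 : ‖u‖ ^ 2 = ⟪u, u⟫ := (real_inner_self_eq_norm_sq u).symm
      have e3 : ⟪x, u⟫ ≤ ‖x‖ * ‖u‖ := real_inner_le_norm _ _
      linarith [e1, e2, e3]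
    exact le_of_mul_le_mul_right (by nlinarith) h0

private lemma row_norm_sq {r : ℕ} (B : Matrix (Fin n) (Fin r) ℝ) (hB : Bᵀ * B = 1) (i : Fin n) :
    ∑ j, (B i j) ^ 2
      = ‖Matrix.toEuclideanLin (B * Bᵀ) (EuclideanSpace.single i 1)‖ ^ 2 := by
  have hsym : ∀ a b, (B * Bᵀ) a b = (B * Bᵀ) b a := by
    intro a b
    have : (B * Bᵀ)ᵀ = B * Bᵀ := by simp [Matrix.transpose_mul]
    calc (B * Bᵀ) a b = (B * Bᵀ)ᵀ b a := rfl
    _ = (B * Bᵀ) b a := by rw [this]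
  have hid : (B * Bᵀ) * (B * Bᵀ) = B * Bᵀ := by
    rw [Matrix.mul_assoc, ← Matrix.mul_assoc Bᵀ, hB, Matrix.one_mul]
  have hcoord : ∀ j, Matrix.toEuclideanLin (B * Bᵀ) (EuclideanSpace.single i 1) j
      = (B * Bᵀ) j i := by
    intro j
    rw [euclid_apply]
    simp [EuclideanSpace.single_apply, mul_ite]
  rw [euclid_norm_sq]
  simp only [hcoord]
  have : ∑ j, ((B * Bᵀ) j i) ^ 2 = ((B * Bᵀ) * (B * Bᵀ)) i i := by
    rw [Matrix.mul_apply]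
    apply Finset.sum_congr rfl
    intro j _
    rw [hsym i j]; ring
  rw [this, hid, Matrix.mul_apply]
  apply Finset.sum_congr rfl
  intro j _
  simp [Matrix.transpose_apply]; ring

end aux

/-- Coherence under perturbation: for r-dimensional subspaces A, B of ℝⁿ
(given by orthonormal basis matrices `A`, `B`, so that `P_A = A·Aᵀ` and
`P_B = B·Bᵀ`), the coherences satisfy
`√η(B) ≤ √η(A) + ‖P_{A⊥} P_B‖ · √(n/r)`. -/

theorem coherence_perturbation {n r : ℕ} (hr : 0 < r) (hrn : r ≤ n)
    (A B : Matrix (Fin n) (Fin r) ℝ)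
    (hA : Aᵀ * A = 1) (hB : Bᵀ * B = 1) :
    Real.sqrt (coher B)
      ≤ Real.sqrt (coher A) + spec ((1 - A * Aᵀ) * (B * Bᵀ)) * Real.sqrt (n / r : ℝ) := by
  have hn : 0 < n := lt_of_lt_of_le hr hrn
  haveI : Nonempty (Fin n) := ⟨⟨0, hn⟩⟩
  set s : ℝ := spec ((1 - A * Aᵀ) * (B * Bᵀ)) with hs
  have hs0 : 0 ≤ s := spec_nonneg _
  set f : Fin n → ℝ := fun i => ∑ j, (B i j) ^ 2 with hf
  set g : Fin n → ℝ := fun i => ∑ j, (A i j) ^ 2 with hg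
  have hgbdd : BddAbove (Set.range g) := (Set.finite_range g).bddAbove
  have hfbdd : BddAbove (Set.range f) := (Set.finite_range f).bddAbove
  have hg0 : 0 ≤ ⨆ i, g i :=
    le_trans (by positivity : (0:ℝ) ≤ g (Classical.arbitrary _)) (le_ciSup hgbdd _)
  -- transpose trick for spec
  have hspec : spec ((B * Bᵀ) * (1 - A * Aᵀ)) = s := by
    rw [hs, ← spec_transpose ((1 - A * Aᵀ) * (B * Bᵀ))]
    congr 1
    rw [Matrix.transpose_mul]
    congr 1 <;> simp [Matrix.transpose_mul]
  -- per-index bound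
  have key : ∀ i, Real.sqrt (f i) ≤ Real.sqrt (⨆ i, g i) + s := by
    intro i
    set e : EuclideanSpace ℝ (Fin n) := EuclideanSpace.single i 1 with he
    have hne : ‖e‖ = 1 := by simp [he, EuclideanSpace.norm_single]
    have h1 : Real.sqrt (f i) = ‖Matrix.toEuclideanLin (B * Bᵀ) e‖ := by
      show Real.sqrt (∑ j, (B i j) ^ 2) = _
      rw [row_norm_sq B hB i, Real.sqrt_sq (norm_nonneg _)]
    have h2 : Real.sqrt (g i) = ‖Matrix.toEuclideanLin (A * Aᵀ) e‖ := by
      show Real.sqrt (∑ j, (A i j) ^ 2) = _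
      rw [row_norm_sq A hA i, Real.sqrt_sq (norm_nonneg _)]
    have hdecomp : (B * Bᵀ) = (B * Bᵀ) * (A * Aᵀ) + (B * Bᵀ) * (1 - A * Aᵀ) := by
      noncomm_ring
    have hsplit : Matrix.toEuclideanLin (B * Bᵀ) e
        = Matrix.toEuclideanLin ((B * Bᵀ) * (A * Aᵀ)) e
          + Matrix.toEuclideanLin ((B * Bᵀ) * (1 - A * Aᵀ)) e := by
      conv_lhs => rw [hdecomp]
      rw [map_add, LinearMap.add_apply]
    have hb1 : ‖Matrix.toEuclideanLin ((B * Bᵀ) * (A * Aᵀ)) e‖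
        ≤ ‖Matrix.toEuclideanLin (A * Aᵀ) e‖ := by
      rw [euclid_mul]
      exact proj_contraction B hB _
    have hb2 : ‖Matrix.toEuclideanLin ((B * Bᵀ) * (1 - A * Aᵀ)) e‖ ≤ s := by
      calc ‖Matrix.toEuclideanLin ((B * Bᵀ) * (1 - A * Aᵀ)) e‖
          ≤ spec ((B * Bᵀ) * (1 - A * Aᵀ)) * ‖e‖ := apply_le_spec _ _
        _ = s := by rw [hne, mul_one, hspec]
    have hgi : Real.sqrt (g i) ≤ Real.sqrt (⨆ i, g i) :=
      Real.sqrt_le_sqrt (le_ciSup hgbdd i)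
    calc Real.sqrt (f i) = ‖Matrix.toEuclideanLin (B * Bᵀ) e‖ := h1
      _ ≤ ‖Matrix.toEuclideanLin ((B * Bᵀ) * (A * Aᵀ)) e‖
          + ‖Matrix.toEuclideanLin ((B * Bᵀ) * (1 - A * Aᵀ)) e‖ := by
            rw [hsplit]; exact norm_add_le _ _
      _ ≤ ‖Matrix.toEuclideanLin (A * Aᵀ) e‖ + s := add_le_add hb1 hb2
      _ = Real.sqrt (g i) + s := by rw [h2]
      _ ≤ Real.sqrt (⨆ i, g i) + s := add_le_add_left hgi s
  -- sup of f attained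
  obtain ⟨i0, hi0⟩ := Finite.exists_max f
  have hfsup : (⨆ i, f i) = f i0 :=
    le_antisymm (ciSup_le hi0) (le_ciSup hfbdd i0)
  have hq : (0:ℝ) ≤ (n / r : ℝ) := by positivity
  calc Real.sqrt (coher B) = Real.sqrt ((n / r : ℝ)) * Real.sqrt (f i0) := by
        rw [show coher B = (n / r : ℝ) * ⨆ i, f i from rfl, hfsup, Real.sqrt_mul hq]
    _ ≤ Real.sqrt ((n / r : ℝ)) * (Real.sqrt (⨆ i, g i) + s) := by
        exact mul_le_mul_of_nonneg_left (key i0) (Real.sqrt_nonneg _)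
    _ = Real.sqrt (coher A) + s * Real.sqrt (n / r : ℝ) := by
        rw [show coher A = (n / r : ℝ) * ⨆ i, g i from rfl, Real.sqrt_mul hq]; ring
end

section
/- Let S_o ∈ R^{n×r} and S_o^⊥ ∈ R^{n×(n−r)} together form an orthonormal basis of R^n (columns of S_o span 𝒮_o and columns of S_o^⊥ span 𝒮_o^⊥). With P_ω a Bernoulli(p) diagonal projection, E[S_oᵀ P_ω S_o^⊥] = 0, and the independent summands A_i := (ε_i − p)·S_oᵀ E_{i,i} S_o^⊥ satisfy ‖A_i‖ ≤ √(η(𝒮_o)·r/n), ‖Σ_i E[A_i A_iᵀ]‖ ≤ p, and ‖Σ_i E[A_iᵀ A_i]‖ ≤ p·η(𝒮_o)·r/n. -/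
open Matrix MeasureTheory ProbabilityTheory

/-!
Each summand `Soᵀ Eᵢᵢ Sop` is the rank-one matrix `vecMulVec (So i) (Sop i)` of the `i`-th rows,
so its norm is at most `‖So i‖ ‖Sop i‖`, where `‖So i‖² + ‖Sop i‖² = 1` by completeness and
`‖So i‖² ≤ η r / n`. The expectation is linear in the `εᵢ`, so it equals `p Soᵀ Sop = 0`.
As `E (εᵢ - p)² = p - p²`, the two variance sums are `Soᵀ D So` and `Sopᵀ D' Sop` with diagonal
`Dᵢᵢ = (p - p²) ‖Sop i‖²` and `D'ᵢᵢ = (p - p²) ‖So i‖²`; the outer factors are isometries, so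
these norms are at most `max Dᵢᵢ ≤ p` and `max D'ᵢᵢ ≤ p η r / n`.
-/

open scoped Matrix.Norms.L2Operator

theorem spec_eq_l2_opNorm {n m : ℕ} (M : Matrix (Fin n) (Fin m) ℝ) : spec M = ‖M‖ := rfl

theorem coher_mul_div_eq_iSup {n r : ℕ} (hn : n ≠ 0) (hr : r ≠ 0)
    (S : Matrix (Fin n) (Fin r) ℝ) :
    coher S * r / n = ⨆ i, ‖WithLp.toLp 2 (S i)‖ ^ 2 := by
  simp only [coher, EuclideanSpace.real_norm_sq_eq]
  field_simp

theorem EuclideanSpace.norm_toLp_sq_eq_dotProduct_self {n : Type*} [Fintype n] (u : n → ℝ) :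
    ‖WithLp.toLp 2 u‖ ^ 2 = u ⬝ᵥ u := by
  rw [EuclideanSpace.real_norm_sq_eq]
  simp [dotProduct, sq]

namespace Matrix

variable {m n r : Type*}

theorem transpose_mul_single_mul {α : Type*} [CommSemiring α] [Fintype n] [DecidableEq n]
    (S : Matrix n r α) (T : Matrix n m α) (i : n) :
    Sᵀ * single i i (1 : α) * T = vecMulVec (S i) (T i) := by
  ext j k
  simp [mul_apply, single, vecMulVec_apply, ite_and]

theorem norm_row_sq_add_norm_row_sq_eq_one [Fintype m] [Fintype r] [DecidableEq n]
    {S : Matrix n r ℝ} {T : Matrix n m ℝ} (h : S * Sᵀ + T * Tᵀ = 1) (i : n) :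
    ‖WithLp.toLp 2 (S i)‖ ^ 2 + ‖WithLp.toLp 2 (T i)‖ ^ 2 = 1 := by
  simp only [EuclideanSpace.norm_toLp_sq_eq_dotProduct_self]
  simpa [mul_apply, dotProduct] using congr_fun (congr_fun h i) i

theorem transpose_mul_diagonal_mul_apply {α : Type*} [CommSemiring α] [Fintype n]
    [DecidableEq n] (S : Matrix n r α) (T : Matrix n m α) (d : n → α) (j : r) (k : m) :
    (Sᵀ * diagonal d * T) j k = ∑ i, d i * (S i j * T i k) := by
  rw [mul_apply]
  simp only [mul_diagonal, transpose_apply]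
  exact Finset.sum_congr rfl fun i _ => by ring

theorem l2_opNorm_vecMulVec_le [Fintype m] [Fintype n] [DecidableEq n]
    (u : m → ℝ) (v : n → ℝ) :
    ‖vecMulVec u v‖ ≤ ‖WithLp.toLp 2 u‖ * ‖WithLp.toLp 2 v‖ := by
  rw [l2_opNorm_def]
  refine ContinuousLinearMap.opNorm_le_bound _ (by positivity) fun x => ?_
  have hx : (toEuclideanLin.trans LinearMap.toContinuousLinearMap) (vecMulVec u v) x
      = inner ℝ (WithLp.toLp 2 v) x • WithLp.toLp 2 u := by
    ext i
    simp [vecMulVec_mulVec, dotProduct, PiLp.inner_apply, mul_comm]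
  rw [hx, norm_smul, Real.norm_eq_abs, mul_comm ‖WithLp.toLp 2 u‖, mul_right_comm]
  gcongr
  exact abs_real_inner_le_norm _ _

theorem l2_opNorm_le_one_of_transpose_mul_self [Fintype m] [Fintype n] [DecidableEq n]
    {A : Matrix m n ℝ} (hA : Aᵀ * A = 1) : ‖A‖ ≤ 1 := by
  rw [← sq_le_one_iff₀ (norm_nonneg A), sq, ← l2_opNorm_conjTranspose_mul_self,
    conjTranspose_eq_transpose_of_trivial, hA, ← diagonal_one, l2_opNorm_diagonal]
  exact (pi_norm_const_le 1).trans_eq norm_one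

theorem l2_opNorm_transpose_mul_diagonal_mul_le [Fintype m] [Fintype n] [DecidableEq m]
    [DecidableEq n] {A : Matrix m n ℝ} (hA : Aᵀ * A = 1) (d : m → ℝ) :
    ‖Aᵀ * diagonal d * A‖ ≤ ‖d‖ := by
  have hA₁ : ‖A‖ ≤ 1 := l2_opNorm_le_one_of_transpose_mul_self hA
  have hAt : ‖Aᵀ‖ ≤ 1 := by
    rwa [← conjTranspose_eq_transpose_of_trivial, l2_opNorm_conjTranspose]
  calc ‖Aᵀ * diagonal d * A‖ ≤ ‖Aᵀ‖ * ‖diagonal d‖ * ‖A‖ := by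
        grw [l2_opNorm_mul, l2_opNorm_mul]
    _ ≤ 1 * ‖d‖ * 1 := by
        rw [l2_opNorm_diagonal]
        gcongr
    _ = ‖d‖ := by ring

theorem l2_opNorm_transpose_mul_diagonal_sub_sq_mul_le [Fintype m] [Fintype n] [DecidableEq m]
    [DecidableEq n] {A : Matrix m n ℝ} (hA : Aᵀ * A = 1) {p C : ℝ} (hp0 : 0 ≤ p) (hp1 : p ≤ 1)
    (hC : 0 ≤ C) {x : m → ℝ} (hx0 : ∀ i, 0 ≤ x i) (hxC : ∀ i, x i ≤ C) :
    ‖Aᵀ * diagonal (fun i => (p - p ^ 2) * x i) * A‖ ≤ p * C := by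
  refine (l2_opNorm_transpose_mul_diagonal_mul_le hA _).trans
    ((pi_norm_le_iff_of_nonneg (mul_nonneg hp0 hC)).2 fun i => ?_)
  have hvar : 0 ≤ p - p ^ 2 := by nlinarith
  rw [Real.norm_of_nonneg (mul_nonneg hvar (hx0 i))]
  nlinarith [hx0 i, hxC i]

end Matrix

section Sampling

variable {Ω : Type*} [MeasurableSpace Ω] {μ : Measure Ω}
variable {m n r : Type*} [Fintype n] [DecidableEq n]

theorem integral_transpose_mul_diagonal_mul_apply {e : n → Ω → ℝ}
    (he : ∀ i, Integrable (e i) μ) {p : ℝ} (hp : ∀ i, ∫ ω, e i ω ∂μ = p)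
    (S : Matrix n r ℝ) (T : Matrix n m ℝ) (j : r) (k : m) :
    ∫ ω, (Sᵀ * diagonal (fun i => e i ω) * T) j k ∂μ = p * (Sᵀ * T) j k := by
  simp only [transpose_mul_diagonal_mul_apply]
  rw [integral_finsetSum _ fun i _ => (he i).mul_const _]
  simp only [integral_mul_const, hp, ← Finset.mul_sum, mul_apply, transpose_apply]

theorem sum_integral_smul_vecMulVec_mul [Fintype m] (c : n → Ω → ℝ) (S : Matrix n r ℝ)
    (T : Matrix n m ℝ) :
    (of fun j k => ∑ i, ∫ ω,
        ((c i ω • vecMulVec (S i) (T i)) * (c i ω • vecMulVec (T i) (S i))) j k ∂μ)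
      = Sᵀ * diagonal (fun i => (∫ ω, c i ω ^ 2 ∂μ) * ‖WithLp.toLp 2 (T i)‖ ^ 2) *
          S := by
  ext j k
  have hentry i ω : ((c i ω • vecMulVec (S i) (T i)) * (c i ω • vecMulVec (T i) (S i))) j k
      = c i ω ^ 2 * ‖WithLp.toLp 2 (T i)‖ ^ 2 * (S i j * S i k) := by
    rw [Matrix.smul_mul, Matrix.mul_smul, vecMulVec_mul_vecMulVec,
      EuclideanSpace.norm_toLp_sq_eq_dotProduct_self]
    simp only [vecMulVec_smul, Matrix.smul_apply, vecMulVec_apply, smul_eq_mul]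
    ring
  simp only [of_apply, hentry, integral_mul_const, transpose_mul_diagonal_mul_apply]

variable [IsProbabilityMeasure μ]

theorem integrable_of_zero_or_one {f : Ω → ℝ} (hf : Measurable f)
    (h01 : ∀ ω, f ω = 0 ∨ f ω = 1) : Integrable f μ := by
  refine .of_bound hf.aestronglyMeasurable 1 (ae_of_all _ fun ω => ?_)
  rcases h01 ω with h | h <;> simp [h]

theorem integral_sub_sq_of_zero_or_one {f : Ω → ℝ} (hf : Measurable f)
    (h01 : ∀ ω, f ω = 0 ∨ f ω = 1) {p : ℝ} (hp : ∫ ω, f ω ∂μ = p) :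
    ∫ ω, (f ω - p) ^ 2 ∂μ = p - p ^ 2 := by
  have hlin : ∀ ω, (f ω - p) ^ 2 = (1 - 2 * p) * f ω + p ^ 2 := fun ω => by
    rcases h01 ω with h | h <;> rw [h] <;> ring
  simp_rw [hlin]
  rw [integral_add ((integrable_of_zero_or_one hf h01).const_mul _) (integrable_const _),
    integral_const_mul, hp, integral_const, probReal_univ, one_smul]
  ring

end Sampling

theorem abs_sub_le_one_of_zero_or_one {x p : ℝ} (hx : x = 0 ∨ x = 1) (hp0 : 0 ≤ p)
    (hp1 : p ≤ 1) : |x - p| ≤ 1 := by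
  rcases hx with rfl | rfl <;> rw [abs_le] <;> constructor <;> linarith

theorem bernoulli_sampled_cross_term_general {n r : ℕ} (hn : 0 < n) (hr : 0 < r)
    {Ω : Type} [MeasurableSpace Ω] (μ : Measure Ω) [IsProbabilityMeasure μ]
    (p : ℝ) (hp0 : 0 < p) (hp1 : p ≤ 1)
    (So : Matrix (Fin n) (Fin r) ℝ) (Sop : Matrix (Fin n) (Fin (n - r)) ℝ)
    (hSo : Soᵀ * So = 1) (hSop : Sopᵀ * Sop = 1) (horth : Soᵀ * Sop = 0)
    (hcomplete : So * Soᵀ + Sop * Sopᵀ = 1)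
    (ε : Fin n → Ω → ℝ)
    (hmeas : ∀ i, Measurable (ε i))
    (h01 : ∀ i ω, ε i ω = 0 ∨ ε i ω = 1)
    (hmean : ∀ i, ∫ ω, ε i ω ∂μ = p) :
    -- (a) zero expectation
    (∀ (j : Fin r) (k : Fin (n - r)),
      ∫ ω, (Soᵀ * Matrix.diagonal (fun i => ε i ω) * Sop) j k ∂μ = 0) ∧
    -- (b) bound on each summand
    (∀ (i : Fin n) (ω : Ω),
      spec ((ε i ω - p) • (Soᵀ * Matrix.single i i (1 : ℝ) * Sop))
        ≤ Real.sqrt (coher So * r / n)) ∧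
    -- (c) bound on the first matrix variance
    spec (Matrix.of fun j k : Fin r =>
        ∑ i : Fin n, ∫ ω,
          (((ε i ω - p) • (Soᵀ * Matrix.single i i (1 : ℝ) * Sop)) *
            ((ε i ω - p) • (Soᵀ * Matrix.single i i (1 : ℝ) * Sop))ᵀ) j k ∂μ)
      ≤ p ∧
    -- (d) bound on the second matrix variance
    spec (Matrix.of fun j k : Fin (n - r) =>
        ∑ i : Fin n, ∫ ω,
          (((ε i ω - p) • (Soᵀ * Matrix.single i i (1 : ℝ) * Sop))ᵀ *
            ((ε i ω - p) • (Soᵀ * Matrix.single i i (1 : ℝ) * Sop))) j k ∂μ)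
      ≤ p * coher So * r / n := by
  set s := ⨆ i, ‖WithLp.toLp 2 (So i)‖ ^ 2
  have hcoher : coher So * r / n = s := coher_mul_div_eq_iSup hn.ne' hr.ne' So
  have hvar i : ∫ ω, (ε i ω - p) ^ 2 ∂μ = p - p ^ 2 :=
    integral_sub_sq_of_zero_or_one (hmeas i) (h01 i) (hmean i)
  have hSo_row i : ‖WithLp.toLp 2 (So i)‖ ^ 2 ≤ s :=
    le_ciSup (f := fun i => ‖WithLp.toLp 2 (So i)‖ ^ 2) (Set.finite_range _).bddAbove i
  have hSop_row i : ‖WithLp.toLp 2 (Sop i)‖ ^ 2 ≤ 1 := by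
    linarith [norm_row_sq_add_norm_row_sq_eq_one hcomplete i, sq_nonneg ‖WithLp.toLp 2 (So i)‖]
  simp only [spec_eq_l2_opNorm, transpose_mul_single_mul, transpose_smul, transpose_vecMulVec]
  refine ⟨fun j k => ?_, fun i ω => ?_, ?_, ?_⟩
  · rw [integral_transpose_mul_diagonal_mul_apply
      (fun i => integrable_of_zero_or_one (hmeas i) (h01 i)) hmean, horth, Matrix.zero_apply,
      mul_zero]
  · have hε : ‖ε i ω - p‖ ≤ 1 := abs_sub_le_one_of_zero_or_one (h01 i ω) hp0.le hp1
    calc ‖(ε i ω - p) • vecMulVec (So i) (Sop i)‖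
        ≤ 1 * (√s * 1) := by
          grw [norm_smul, hε, l2_opNorm_vecMulVec_le, Real.le_sqrt_of_sq_le (hSo_row i),
            (sq_le_one_iff₀ (norm_nonneg _)).1 (hSop_row i)]
      _ = √(coher So * r / n) := by rw [hcoher]; ring
  · rw [sum_integral_smul_vecMulVec_mul]
    simp only [hvar]
    exact (l2_opNorm_transpose_mul_diagonal_sub_sq_mul_le hSo hp0.le hp1 zero_le_one
      (fun _ => sq_nonneg _) hSop_row).trans_eq (mul_one p)
  · rw [mul_assoc p, mul_div_assoc, hcoher, sum_integral_smul_vecMulVec_mul]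
    simp only [hvar]
    exact l2_opNorm_transpose_mul_diagonal_sub_sq_mul_le hSop hp0.le hp1
      (Real.iSup_nonneg fun _ => sq_nonneg _) (fun _ => sq_nonneg _) hSo_row

/-- Bernoulli-sampled cross term: `S_o ∈ ℝ^{n×r}` and `S_o^⊥ ∈ ℝ^{n×(n−r)}`
together form an orthonormal basis of ℝⁿ; `P_ω = diag(ε₁,…,ε_n)` with `εᵢ`
i.i.d. Bernoulli(p).  With `A_i := (ε_i − p)·S_oᵀ E_{i,i} S_o^⊥`:
(a) `E[S_oᵀ P_ω S_o^⊥] = 0`;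
(b) `‖A_i‖ ≤ √(η(𝒮_o)·r/n)` for each i;
(c) `‖Σᵢ E[A_i A_iᵀ]‖ ≤ p`;
(d) `‖Σᵢ E[A_iᵀ A_i]‖ ≤ p·η(𝒮_o)·r/n`. -/
theorem bernoulli_sampled_cross_term {n r : ℕ} (hn : 0 < n) (hr : 0 < r) (hrn : r ≤ n)
    {Ω : Type} [MeasurableSpace Ω] (μ : Measure Ω) [IsProbabilityMeasure μ]
    (p : ℝ) (hp0 : 0 < p) (hp1 : p ≤ 1)
    (So : Matrix (Fin n) (Fin r) ℝ) (Sop : Matrix (Fin n) (Fin (n - r)) ℝ)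
    (hSo : Soᵀ * So = 1) (hSop : Sopᵀ * Sop = 1) (horth : Soᵀ * Sop = 0)
    (hcomplete : So * Soᵀ + Sop * Sopᵀ = 1)
    (ε : Fin n → Ω → ℝ)
    (hmeas : ∀ i, Measurable (ε i))
    (h01 : ∀ i ω, ε i ω = 0 ∨ ε i ω = 1)
    (hmean : ∀ i, ∫ ω, ε i ω ∂μ = p)
    (hindep : iIndepFun ε μ) :
    -- (a) zero expectation
    (∀ (j : Fin r) (k : Fin (n - r)),
      ∫ ω, (Soᵀ * Matrix.diagonal (fun i => ε i ω) * Sop) j k ∂μ = 0) ∧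
    -- (b) bound on each summand
    (∀ (i : Fin n) (ω : Ω),
      spec ((ε i ω - p) • (Soᵀ * Matrix.single i i (1 : ℝ) * Sop))
        ≤ Real.sqrt (coher So * r / n)) ∧
    -- (c) bound on the first matrix variance
    spec (Matrix.of fun j k : Fin r =>
        ∑ i : Fin n, ∫ ω,
          (((ε i ω - p) • (Soᵀ * Matrix.single i i (1 : ℝ) * Sop)) *
            ((ε i ω - p) • (Soᵀ * Matrix.single i i (1 : ℝ) * Sop))ᵀ) j k ∂μ)
      ≤ p ∧
    -- (d) bound on the second matrix variance
    spec (Matrix.of fun j k : Fin (n - r) =>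
        ∑ i : Fin n, ∫ ω,
          (((ε i ω - p) • (Soᵀ * Matrix.single i i (1 : ℝ) * Sop))ᵀ *
            ((ε i ω - p) • (Soᵀ * Matrix.single i i (1 : ℝ) * Sop))) j k ∂μ)
      ≤ p * coher So * r / n :=
  bernoulli_sampled_cross_term_general hn hr μ p hp0 hp1 So Sop hSo hSop horth hcomplete ε hmeas h01
    hmean
end

section
/- Least-change interpolation: Let S_{k-1} ∈ R^{n×r} have orthonormal columns with span 𝒮_{k-1}, and let y ∈ R^n be supported on an index set ω ⊆ {1,...,n} (i.e., y = P_ω y). Assume P_ω S_{k-1} has full column rank r. Then the unique minimizer of ‖P_{𝒮_{k-1}^⊥} x‖₂² over all x ∈ R^n satisfying P_ω x = y is x* = y + P_{ω^C} S_{k-1} (P_ω S_{k-1})† y, where P_{ω^C} = I_n − P_ω and † denotes the Moore–Penrose pseudoinverse. -/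
/-!
A feasible `x` differs from `x*` by some `w` with `P_ω w = 0`. With `a = (P_ω S)† y`, which solves
the normal equation `Sᵀ P_ω S a = Sᵀ y`, one has `Sᵀ x* = a`, so the residual
`P_{𝒮⊥} x* = x* - S a = P_ω (y - S a)` lies in the range of `P_ω` and is orthogonal to `w`.
Pythagoras gives `‖P_{𝒮⊥} x‖² = ‖P_{𝒮⊥} x*‖² + ‖P_{𝒮⊥} w‖²`, and equality forces `w = S b` with
`P_ω S b = 0`, hence `b = 0` by full column rank.
-/

namespace Matrix

theorem mulVec_injective_of_rank_eq_card {m n K : Type*} [Fintype n] [Field K]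
    {A : Matrix m n K} (h : A.rank = Fintype.card n) : Function.Injective A.mulVec := by
  have hker : Module.finrank K (LinearMap.ker A.mulVecLin) = 0 := by
    have := LinearMap.finrank_range_add_finrank_ker A.mulVecLin
    rw [show Module.finrank K (LinearMap.range A.mulVecLin) = A.rank from rfl, h,
      Module.finrank_fintype_fun_eq_card] at this
    omega
  rw [← coe_mulVecLin, ← LinearMap.ker_eq_bot]
  exact Submodule.finrank_eq_zero.mp hker

theorem isUnit_transpose_mul_self_of_rank_eq_card {m n K : Type*} [Fintype m] [Fintype n]
    [DecidableEq n] [Field K] [LinearOrder K] [IsStrictOrderedRing K] {A : Matrix m n K}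
    (h : A.rank = Fintype.card n) : IsUnit (Aᵀ * A) :=
  mulVec_injective_iff_isUnit.mp <|
    mulVec_injective_of_rank_eq_card (by rw [rank_transpose_mul_self, h])

section Projections

variable {m k R : Type*} [CommRing R]

theorem isIdempotentElem_diagonal_indicator [Fintype m] [DecidableEq m] (ω : Finset m) :
    IsIdempotentElem (diagonal fun i => if i ∈ ω then (1 : R) else 0) := by
  rw [IsIdempotentElem, diagonal_mul_diagonal]
  congr 1
  ext i
  split_ifs <;> simp

theorem isSymm_one_sub_mul_transpose [Fintype k] [DecidableEq m] (S : Matrix m k R) :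
    (1 - S * Sᵀ).IsSymm := by
  rw [IsSymm, transpose_sub, transpose_one, transpose_mul, transpose_transpose]

theorem isIdempotentElem_one_sub_mul_transpose [Fintype m] [Fintype k] [DecidableEq m]
    [DecidableEq k] {S : Matrix m k R} (hS : Sᵀ * S = 1) :
    IsIdempotentElem (1 - S * Sᵀ) :=
  IsIdempotentElem.one_sub <| by
    rw [IsIdempotentElem, Matrix.mul_assoc, ← Matrix.mul_assoc Sᵀ, hS, Matrix.one_mul]

theorem transpose_mul_self_of_isSymm_of_isIdempotentElem [Fintype m] {P : Matrix m m R}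
    (hPs : P.IsSymm) (hPi : IsIdempotentElem P) (S : Matrix m k R) :
    (P * S)ᵀ * (P * S) = Sᵀ * P * S := by
  rw [transpose_mul, hPs.eq, Matrix.mul_assoc, ← Matrix.mul_assoc P, hPi.eq, Matrix.mul_assoc]

theorem mulVec_dotProduct_eq_zero_of_mulVec_eq_zero [Fintype m] {P : Matrix m m R}
    (hP : P.IsSymm) (u : m → R) {w : m → R} (hw : P *ᵥ w = 0) : P *ᵥ u ⬝ᵥ w = 0 := by
  rw [← vecMul_transpose, hP.eq, ← dotProduct_mulVec, hw, dotProduct_zero]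

theorem mulVec_add_dotProduct_mulVec_add [Fintype m] {Q : Matrix m m R} (hQs : Q.IsSymm)
    (hQi : IsIdempotentElem Q) {u w : m → R} (h : Q *ᵥ u ⬝ᵥ w = 0) :
    Q *ᵥ (u + w) ⬝ᵥ Q *ᵥ (u + w) = Q *ᵥ u ⬝ᵥ Q *ᵥ u + Q *ᵥ w ⬝ᵥ Q *ᵥ w := by
  have hcross : Q *ᵥ u ⬝ᵥ Q *ᵥ w = 0 := by
    rw [dotProduct_mulVec, ← mulVec_transpose, hQs.eq, mulVec_mulVec, hQi.eq, h]
  rw [mulVec_add, add_dotProduct, dotProduct_add, dotProduct_add, hcross,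
    dotProduct_comm (Q *ᵥ w), hcross, add_zero, zero_add]

theorem mulVec_dotProduct_mulVec_eq_add_of_mulVec_eq [Fintype m] {P Q : Matrix m m R}
    (hPs : P.IsSymm) (hQs : Q.IsSymm) (hQi : IsIdempotentElem Q) {x₀ x v : m → R}
    (hx₀ : Q *ᵥ x₀ = P *ᵥ v) (hx : P *ᵥ x = P *ᵥ x₀) :
    Q *ᵥ x ⬝ᵥ Q *ᵥ x = Q *ᵥ x₀ ⬝ᵥ Q *ᵥ x₀ + Q *ᵥ (x - x₀) ⬝ᵥ Q *ᵥ (x - x₀) := by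
  have hker : P *ᵥ (x - x₀) = 0 := by rw [mulVec_sub, hx, sub_self]
  rw [← mulVec_add_dotProduct_mulVec_add hQs hQi
    (hx₀ ▸ mulVec_dotProduct_eq_zero_of_mulVec_eq_zero hPs v hker), add_sub_cancel]

end Projections

section LeastChange

variable {m k R : Type*} [Fintype m] [Fintype k] [DecidableEq m] [CommRing R]
  {S : Matrix m k R} {P : Matrix m m R} {y : m → R}

theorem mulVec_add_one_sub_mulVec (hP : IsIdempotentElem P) (hy : P *ᵥ y = y) (v : m → R) :
    P *ᵥ (y + (1 - P) *ᵥ v) = y := by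
  rw [mulVec_add, hy, mulVec_mulVec, Matrix.mul_sub, Matrix.mul_one, hP.eq, sub_self,
    zero_mulVec, add_zero]

theorem one_sub_mul_transpose_mulVec_eq_of_normal_eq [DecidableEq k] (hS : Sᵀ * S = 1)
    (hy : P *ᵥ y = y) {a : k → R} (ha : (Sᵀ * P * S) *ᵥ a = Sᵀ *ᵥ y) :
    (1 - S * Sᵀ) *ᵥ (y + ((1 - P) * S) *ᵥ a) = P *ᵥ (y - S *ᵥ a) := by
  have hSx : Sᵀ *ᵥ (y + ((1 - P) * S) *ᵥ a) = a := by
    rw [mulVec_add, mulVec_mulVec, Matrix.sub_mul, Matrix.one_mul, Matrix.mul_sub, hS,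
      ← Matrix.mul_assoc, sub_mulVec, ha, one_mulVec]
    abel
  rw [sub_mulVec, one_mulVec, ← mulVec_mulVec _ S, hSx, mulVec_sub, hy, Matrix.sub_mul,
    Matrix.one_mul, sub_mulVec, mulVec_mulVec]
  abel

theorem eq_zero_of_mulVec_eq_zero_of_one_sub_mul_transpose_mulVec_eq_zero
    (hPS : Function.Injective (P * S).mulVec) {w : m → R} (hPw : P *ᵥ w = 0)
    (hQw : (1 - S * Sᵀ) *ᵥ w = 0) : w = 0 := by
  have hw : w = S *ᵥ (Sᵀ *ᵥ w) := by
    rw [sub_mulVec, one_mulVec, sub_eq_zero] at hQw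
    rwa [mulVec_mulVec]
  have hSw : Sᵀ *ᵥ w = 0 := hPS <| by
    rw [← mulVec_mulVec, ← hw, hPw, mulVec_zero]
  rw [hw, hSw, mulVec_zero]

end LeastChange

end Matrix

open Matrix

theorem least_change_interpolation_general {n r : ℕ}
    (S : Matrix (Fin n) (Fin r) ℝ) (hS : Sᵀ * S = 1)
    (ω : Finset (Fin n)) (y : Fin n → ℝ)
    (Pω : Matrix (Fin n) (Fin n) ℝ)
    (hPω : Pω = Matrix.diagonal (fun i => if i ∈ ω then (1 : ℝ) else 0))
    (hy : Pω.mulVec y = y)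
    (hrank : (Pω * S).rank = r) :
    -- the pseudoinverse, the candidate minimizer, and the objective
    ∀ pinv xstar obj,
      pinv = (Sᵀ * Pω * S)⁻¹ * Sᵀ * Pω →
      xstar = y + ((1 - Pω) * S * pinv).mulVec y →
      obj = (fun x : Fin n → ℝ => ∑ i, ((1 - S * Sᵀ).mulVec x i) ^ 2) →
      -- x* is feasible, and it is the unique minimizer
      Pω.mulVec xstar = y ∧
        (∀ x : Fin n → ℝ, Pω.mulVec x = y → obj xstar ≤ obj x) ∧
        (∀ x : Fin n → ℝ, Pω.mulVec x = y → obj x = obj xstar → x = xstar) := by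
  rintro pinv xstar obj rfl hxstar rfl
  set Q := 1 - S * Sᵀ
  have hPs : Pω.IsSymm := hPω ▸ isSymm_diagonal _
  have hPi : IsIdempotentElem Pω := hPω ▸ isIdempotentElem_diagonal_indicator ω
  have hPS : Function.Injective (Pω * S).mulVec :=
    mulVec_injective_of_rank_eq_card (by rw [hrank, Fintype.card_fin])
  have hM : IsUnit (Sᵀ * Pω * S).det := by
    rw [← isUnit_iff_isUnit_det, ← transpose_mul_self_of_isSymm_of_isIdempotentElem hPs hPi]
    exact isUnit_transpose_mul_self_of_rank_eq_card (by rw [hrank, Fintype.card_fin])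
  set a := ((Sᵀ * Pω * S)⁻¹ * Sᵀ * Pω) *ᵥ y
  have ha : (Sᵀ * Pω * S) *ᵥ a = Sᵀ *ᵥ y := by
    rw [mulVec_mulVec, Matrix.mul_assoc _ Sᵀ,
      mul_nonsing_inv_cancel_left _ _ hM, ← mulVec_mulVec, hy]
  rw [← mulVec_mulVec] at hxstar
  have hfeas : Pω *ᵥ xstar = y := by
    rw [hxstar, ← mulVec_mulVec]
    exact mulVec_add_one_sub_mulVec hPi hy _
  have hres : Q *ᵥ xstar = Pω *ᵥ (y - S *ᵥ a) :=
    hxstar ▸ one_sub_mul_transpose_mulVec_eq_of_normal_eq hS hy ha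
  have hobj : ∀ x, (∑ i, (Q *ᵥ x) i ^ 2) = Q *ᵥ x ⬝ᵥ Q *ᵥ x := fun x => by
    simp only [dotProduct, sq]
  have hpyth : ∀ x, Pω *ᵥ x = y →
      Q *ᵥ x ⬝ᵥ Q *ᵥ x = Q *ᵥ xstar ⬝ᵥ Q *ᵥ xstar + Q *ᵥ (x - xstar) ⬝ᵥ Q *ᵥ (x - xstar) :=
    fun x hx => mulVec_dotProduct_mulVec_eq_add_of_mulVec_eq hPs (isSymm_one_sub_mul_transpose S)
      (isIdempotentElem_one_sub_mul_transpose hS) hres (by rw [hx, hfeas])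
  simp only [hobj]
  refine ⟨hfeas, fun x hx => ?_, fun x hx hx' => ?_⟩
  · rw [hpyth x hx]
    exact le_add_of_nonneg_right (by simpa using dotProduct_star_self_nonneg (Q *ᵥ (x - xstar)))
  · have hQ : Q *ᵥ (x - xstar) = 0 := by
      rw [← dotProduct_self_eq_zero]
      linarith [hpyth x hx]
    exact sub_eq_zero.mp <| eq_zero_of_mulVec_eq_zero_of_one_sub_mul_transpose_mulVec_eq_zero hPS
      (by rw [mulVec_sub, hx, hfeas, sub_self]) hQ

/-- Least-change interpolation: let `S ∈ ℝ^{n×r}` have orthonormal columns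
(spanning `𝒮`), let `ω ⊆ {1,…,n}` with coordinate projection
`P_ω = diag(1_ω)`, and let `y ∈ ℝⁿ` be supported on `ω` (so `P_ω y = y`).
Assume `P_ω S` has full column rank r, so its Moore–Penrose pseudoinverse is
`(P_ω S)† = (Sᵀ P_ω S)⁻¹ Sᵀ P_ω`.  Then
`x* = y + P_{ωᶜ} S (P_ω S)† y` is the unique minimizer of
`‖P_{𝒮⊥} x‖₂²` over all `x` with `P_ω x = y`. -/
theorem least_change_interpolation {n r : ℕ} (hr : 0 < r) (hrn : r ≤ n)
    (S : Matrix (Fin n) (Fin r) ℝ) (hS : Sᵀ * S = 1)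
    (ω : Finset (Fin n)) (y : Fin n → ℝ)
    (Pω : Matrix (Fin n) (Fin n) ℝ)
    (hPω : Pω = Matrix.diagonal (fun i => if i ∈ ω then (1 : ℝ) else 0))
    (hy : Pω.mulVec y = y)
    (hrank : (Pω * S).rank = r) :
    -- the pseudoinverse, the candidate minimizer, and the objective
    ∀ pinv xstar obj,
      pinv = (Sᵀ * Pω * S)⁻¹ * Sᵀ * Pω →
      xstar = y + ((1 - Pω) * S * pinv).mulVec y →
      obj = (fun x : Fin n → ℝ => ∑ i, ((1 - S * Sᵀ).mulVec x i) ^ 2) →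
      -- x* is feasible, and it is the unique minimizer
      Pω.mulVec xstar = y ∧
        (∀ x : Fin n → ℝ, Pω.mulVec x = y → obj xstar ≤ obj x) ∧
        (∀ x : Fin n → ℝ, Pω.mulVec x = y → obj x = obj xstar → x = xstar) :=
  least_change_interpolation_general S hS ω y Pω hPω hy hrank
end
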